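/- arXiv:math/0506018 — 3 statements merged into one kernel-verified Lean document; each statement's English description precedes it below -/
import Mathlib

section
/- Let Q be a quiver of simply laced Dynkin type, M an indecomposable kQ-module with dimension vector dim M = Σ_i m_i · dim S_i, and fix a vertex i. Let N ⊆ M be any submodule. Then ⟨dim N, dim S_i⟩ + ⟨dim S_i, dim(M/N)⟩ ≤ m_i, where ⟨−,−⟩ is the Euler form. Moreover, for each vertex i there exists a submodule N of M for which equality holds. -/
open scoped BigOperators

/-- A finite-dimensional representation of the quiver with vertex set `V`, arrow set `E`,
source map `s` and target map `t`, over the field `k` (i.e. a `kQ`-module). -/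
structure QuiverRep (k : Type) [Field k] (V E : Type) (s t : E → V) where
  carrier : V → Type
  [acg : ∀ v, AddCommGroup (carrier v)]
  [mod : ∀ v, Module k (carrier v)]
  [fd : ∀ v, FiniteDimensional k (carrier v)]
  map : ∀ e : E, carrier (s e) →ₗ[k] carrier (t e)

namespace QuiverRep

attribute [instance] QuiverRep.acg QuiverRep.mod QuiverRep.fd

variable {k V E : Type} [Field k] {s t : E → V}

/-- The dimension vector of a representation. -/
noncomputable def dimv [Fintype V] (M : QuiverRep k V E s t) : V → ℕ :=
  fun v => Module.finrank k (M.carrier v)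

/-- A subrepresentation: a family of subspaces closed under the structure maps. -/
structure Sub (M : QuiverRep k V E s t) where
  S : ∀ v, Submodule k (M.carrier v)
  compat : ∀ (e : E) (x : M.carrier (s e)), x ∈ S (s e) → M.map e x ∈ S (t e)

/-- The dimension vector of a subrepresentation. -/
noncomputable def Sub.dimv {M : QuiverRep k V E s t} (N : Sub M) : V → ℕ :=
  fun v => Module.finrank k (N.S v)

/-- A subrepresentation as a representation. -/
def Sub.toRep {M : QuiverRep k V E s t} (N : Sub M) : QuiverRep k V E s t where
  carrier v := N.S v
  map e := (M.map e).restrict (fun x hx => N.compat e x hx)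

/-- The quotient representation `M/N`. -/
def Sub.quotRep {M : QuiverRep k V E s t} (N : Sub M) : QuiverRep k V E s t where
  carrier v := M.carrier v ⧸ N.S v
  map e := Submodule.mapQ (N.S (s e)) (N.S (t e)) (M.map e) (fun x hx => N.compat e x hx)

/-- An endomorphism of a representation. -/
structure Endo (M : QuiverRep k V E s t) where
  f : ∀ v, M.carrier v →ₗ[k] M.carrier v
  comm : ∀ e : E, (f (t e)).comp (M.map e) = (M.map e).comp (f (s e))

/-- A representation is indecomposable iff it is nonzero and its only idempotent
endomorphisms are `0` and `1`. -/
def Indec (M : QuiverRep k V E s t) : Prop :=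
  (∃ v, Module.finrank k (M.carrier v) ≠ 0) ∧
    ∀ φ : Endo M, (∀ v, (φ.f v).comp (φ.f v) = φ.f v) →
      (∀ v, φ.f v = 0) ∨ (∀ v, φ.f v = LinearMap.id)

/-- An isomorphism of representations. -/
def Iso (M N : QuiverRep k V E s t) : Prop :=
  ∃ g : ∀ v, M.carrier v ≃ₗ[k] N.carrier v,
    ∀ (e : E) (x : M.carrier (s e)), g (t e) (M.map e x) = N.map e (g (s e) x)

/-- The Euler form of the quiver `(V, E, s, t)`:
`⟨d, e⟩ = Σ_v d_v e_v − Σ_{a : E} d_{s a} e_{t a}`;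
for finite-dimensional representations it satisfies
`⟨dim M, dim N⟩ = dim Hom(M,N) − dim Ext¹(M,N)`. -/
def euler [Fintype V] [Fintype E] (s t : E → V) (d e : V → ℤ) : ℤ :=
  (∑ v, d v * e v) - ∑ a : E, d (s a) * e (t a)

end QuiverRep

open QuiverRep

/-!
Splitting off the diagonal terms, `⟨d, Sᵢ⟩ = dᵢ - Σ_{a : j → i} d_j` and
`⟨Sᵢ, d⟩ = dᵢ - Σ_{a : i → j} d_j`, so for `d = dim N` and `d = dim M/N` the two Euler forms
are at most `nᵢ` and `mᵢ - nᵢ`. Equality holds for the subrepresentation `N` supported on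
the vertices reachable from `i`: every successor of `i` is reachable, so `M/N` vanishes there,
and no predecessor of `i` is, because positive definiteness of the Euler form rules out
oriented cycles: every vertex of the strongly connected component `S` of a cycle is the source
of an arrow inside `S`, so `⟨1_S, 1_S⟩ = |S| - #(arrows inside S) ≤ 0`.
-/

namespace QuiverRep

open Finset Relation

section Acyclic

variable {V E : Type} [Fintype E] {s t : E → V}

def Adj (s t : E → V) (u v : V) : Prop := ∃ a, s a = u ∧ t a = v

theorem card_le_card_filter_of_forall_exists_arrow (S : Finset V)
    [DecidablePred fun a => s a ∈ S ∧ t a ∈ S] (h : ∀ v ∈ S, ∃ a, s a = v ∧ t a ∈ S) :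
    #S ≤ #{a | s a ∈ S ∧ t a ∈ S} :=
  card_le_card_of_surjOn s fun v hv => by
    obtain ⟨a, rfl, ha⟩ := h v hv
    exact ⟨a, by simpa [ha] using hv, rfl⟩

variable [Fintype V]

open Classical in
theorem euler_indicator_self (S : Finset V) :
    euler s t (fun v => if v ∈ S then 1 else 0) (fun v => if v ∈ S then 1 else 0) =
      #S - #{a | s a ∈ S ∧ t a ∈ S} := by
  simp [euler, ← ite_and, and_comm, sum_boole]

theorem not_transGen_self_of_euler_pos (hpos : ∀ d : V → ℤ, d ≠ 0 → 0 < euler s t d d) (v : V) :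
    ¬ TransGen (Adj s t) v v := by
  classical
  intro hv
  let S : Finset V := {w | ReflTransGen (Adj s t) v w ∧ ReflTransGen (Adj s t) w v}
  have hvS : v ∈ S := by simp [S, ReflTransGen.refl]
  have hS : ∀ w ∈ S, ∃ a, s a = w ∧ t a ∈ S := by
    intro w hw
    simp only [S, mem_filter, mem_univ, true_and] at hw
    obtain ⟨u, ⟨a, rfl, rfl⟩, hu⟩ := TransGen.head'_iff.mp (TransGen.trans_right hw.2 hv)
    exact ⟨a, rfl, by simpa [S] using ⟨hw.1.tail ⟨a, rfl, rfl⟩, hu⟩⟩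
  have hne : (fun w => if w ∈ S then (1 : ℤ) else 0) ≠ 0 := fun h => by
    simpa [hvS] using congrFun h v
  have hSpos := hpos _ hne
  rw [euler_indicator_self] at hSpos
  have hcard := card_le_card_filter_of_forall_exists_arrow S hS
  omega

end Acyclic

variable {k V E : Type} [Field k] {s t : E → V}

open Classical in
noncomputable def reachableSub (M : QuiverRep k V E s t) (i : V) : Sub M where
  S v := if ReflTransGen (Adj s t) i v then ⊤ else ⊥
  compat e x hx := by
    by_cases h : ReflTransGen (Adj s t) i (s e)
    · simp [h.tail ⟨e, rfl, rfl⟩]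
    · simp_all

theorem reachableSub_dimv_of_not_reflTransGen (M : QuiverRep k V E s t) {i v : V}
    (h : ¬ ReflTransGen (Adj s t) i v) : (reachableSub M i).dimv v = 0 := by
  have hS : (reachableSub M i).S v = ⊥ := if_neg h
  rw [Sub.dimv, hS, finrank_bot]

variable [Fintype V]

theorem Sub.dimv_le {M : QuiverRep k V E s t} (N : Sub M) (v : V) : N.dimv v ≤ M.dimv v :=
  Submodule.finrank_le _

theorem reachableSub_dimv_of_reflTransGen (M : QuiverRep k V E s t) {i v : V}
    (h : ReflTransGen (Adj s t) i v) : (reachableSub M i).dimv v = M.dimv v := by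
  have hS : (reachableSub M i).S v = ⊤ := if_pos h
  rw [Sub.dimv, hS, finrank_top, dimv]

variable [DecidableEq V] [Fintype E]

theorem euler_single_right (d : V → ℤ) (i : V) :
    euler s t d (Pi.single i 1) = d i - ∑ a with t a = i, d (s a) := by
  simp [euler, Pi.single_apply, sum_filter]

theorem euler_single_left (d : V → ℤ) (i : V) :
    euler s t (Pi.single i 1) d = d i - ∑ a with s a = i, d (t a) := by
  simp [euler, Pi.single_apply, sum_filter]

theorem Sub.euler_single_add_euler_single_quot_le {M : QuiverRep k V E s t} (N : Sub M) (i : V) :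
    euler s t (fun v => (N.dimv v : ℤ)) (Pi.single i 1) +
      euler s t (Pi.single i 1) (fun v => (M.dimv v : ℤ) - N.dimv v) ≤ M.dimv i := by
  rw [euler_single_right, euler_single_left]
  have hN : 0 ≤ ∑ a with t a = i, (N.dimv (s a) : ℤ) := sum_nonneg fun _ _ => by positivity
  have hMN : 0 ≤ ∑ a with s a = i, ((M.dimv (t a) : ℤ) - N.dimv (t a)) :=
    sum_nonneg fun a _ => sub_nonneg.mpr (by exact_mod_cast N.dimv_le (t a))
  linarith

theorem reachableSub_euler_single_add_euler_single_quot_eq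
    (hacyclic : ∀ v, ¬ TransGen (Adj s t) v v) (M : QuiverRep k V E s t) (i : V) :
    euler s t (fun v => ((reachableSub M i).dimv v : ℤ)) (Pi.single i 1) +
      euler s t (Pi.single i 1) (fun v => (M.dimv v : ℤ) - (reachableSub M i).dimv v) =
      M.dimv i := by
  rw [euler_single_right, euler_single_left]
  have hN : ∑ a with t a = i, ((reachableSub M i).dimv (s a) : ℤ) = 0 := by
    refine sum_eq_zero fun a ha => ?_
    have hunreach : ¬ ReflTransGen (Adj s t) i (s a) := fun h =>
      hacyclic i (TransGen.tail' h ⟨a, rfl, (mem_filter.mp ha).2⟩)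
    simp [reachableSub_dimv_of_not_reflTransGen M hunreach]
  have hMN : ∑ a with s a = i, ((M.dimv (t a) : ℤ) - (reachableSub M i).dimv (t a)) = 0 := by
    refine sum_eq_zero fun a ha => ?_
    have hreach : ReflTransGen (Adj s t) i (t a) :=
      ReflTransGen.single ⟨a, (mem_filter.mp ha).2, rfl⟩
    simp [reachableSub_dimv_of_reflTransGen M hreach]
  rw [hN, hMN, reachableSub_dimv_of_reflTransGen M ReflTransGen.refl]
  ring

end QuiverRep

open QuiverRep

theorem euler_form_denominator_estimate_general
    {k V E : Type} [Field k] [Fintype V] [DecidableEq V] [Fintype E] (s t : E → V)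
    (hDynkin : ∀ d : V → ℤ, d ≠ 0 → 0 < euler s t d d)
    (M : QuiverRep k V E s t) (i : V) :
    (∀ N : Sub M,
      euler s t (fun v => (N.dimv v : ℤ)) (Pi.single i 1) +
        euler s t (Pi.single i 1) (fun v => (M.dimv v : ℤ) - (N.dimv v : ℤ)) ≤
      (M.dimv i : ℤ)) ∧
    (∃ N : Sub M,
      euler s t (fun v => (N.dimv v : ℤ)) (Pi.single i 1) +
        euler s t (Pi.single i 1) (fun v => (M.dimv v : ℤ) - (N.dimv v : ℤ)) =
      (M.dimv i : ℤ)) :=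
  ⟨fun N => N.euler_single_add_euler_single_quot_le i, reachableSub M i,
    reachableSub_euler_single_add_euler_single_quot_eq (not_transGen_self_of_euler_pos hDynkin) M i⟩

/-- Let `Q` be a Dynkin quiver, `M` an indecomposable `kQ`-module with
dimension vector `m = dim M`, and `i` a vertex.  Then for every submodule `N ⊆ M` one has
`⟨dim N, dim Sᵢ⟩ + ⟨dim Sᵢ, dim(M/N)⟩ ≤ mᵢ`, and for each vertex `i` there is a submodule
for which equality holds.  (Here `dim(M/N) = dim M − dim N` componentwise.) -/
theorem euler_form_denominator_estimate
    {k V E : Type} [Field k] [Fintype V] [DecidableEq V] [Fintype E] (s t : E → V)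
    (hDynkin : ∀ d : V → ℤ, d ≠ 0 → 0 < euler s t d d)
    (M : QuiverRep k V E s t) (hM : Indec M) (i : V) :
    (∀ N : Sub M,
      euler s t (fun v => (N.dimv v : ℤ)) (Pi.single i 1) +
        euler s t (Pi.single i 1) (fun v => (M.dimv v : ℤ) - (N.dimv v : ℤ)) ≤
      (M.dimv i : ℤ)) ∧
    (∃ N : Sub M,
      euler s t (fun v => (N.dimv v : ℤ)) (Pi.single i 1) +
        euler s t (Pi.single i 1) (fun v => (M.dimv v : ℤ) - (N.dimv v : ℤ)) =
      (M.dimv i : ℤ)) :=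
  euler_form_denominator_estimate_general s t hDynkin M i
end

section
/- Let C be a triangulated category in which every indecomposable object has endomorphism ring k and which is Krull–Schmidt. Suppose U →^a E →^b V →^e U[1] is a non-split triangle with U, V indecomposable. Then for every object N of C: dim Ext¹(E,N) ≤ dim Ext¹(U,N) + dim Ext¹(V,N), and for N = U the inequality is strict: dim Ext¹(E,U) < dim Ext¹(U,U) + dim Ext¹(V,U). -/
open CategoryTheory CategoryTheory.Limits CategoryTheory.Pretriangulated

lemma ext_dim_aux
    {k : Type} [Field k] {C : Type*} [Category C] [Preadditive C] [Linear k C]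
    [HasZeroObject C] [HasShift C ℤ] [∀ n : ℤ, (shiftFunctor C n).Additive]
    [Pretriangulated C]
    (hfin : ∀ X Y : C, FiniteDimensional k (X ⟶ Y))
    {U E V : C} (a : U ⟶ E) (b : E ⟶ V) (e : V ⟶ U⟦(1 : ℤ)⟧)
    (hT : Triangle.mk a b e ∈ distTriang C) (M : C) :
    Module.finrank k (E ⟶ M) =
      Module.finrank k (LinearMap.range (Linear.leftComp k M a : (E ⟶ M) →ₗ[k] (U ⟶ M))) +
      Module.finrank k (LinearMap.range (Linear.leftComp k M b : (V ⟶ M) →ₗ[k] (E ⟶ M))) := by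
  haveI := hfin E M
  haveI := hfin V M
  have hex : LinearMap.ker (Linear.leftComp k M a : (E ⟶ M) →ₗ[k] (U ⟶ M)) =
      LinearMap.range (Linear.leftComp k M b : (V ⟶ M) →ₗ[k] (E ⟶ M)) := by
    ext f
    constructor
    · intro hf
      obtain ⟨g, hg⟩ := Triangle.yoneda_exact₂ _ hT f hf
      exact ⟨g, hg.symm⟩
    · rintro ⟨g, rfl⟩
      have hab : a ≫ b = 0 := comp_distTriang_mor_zero₁₂ _ hT
      have : a ≫ b ≫ g = 0 := by rw [← Category.assoc, hab, zero_comp]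
      simpa [Linear.leftComp] using this
  have := LinearMap.finrank_range_add_finrank_ker
    (Linear.leftComp k M a : (E ⟶ M) →ₗ[k] (U ⟶ M))
  rw [hex] at this
  omega

/-- Let `C` be a Hom-finite Krull–Schmidt `k`-linear triangulated
category in which every indecomposable has endomorphism ring `k`, and let
`U →ᵃ E →ᵇ V →ᵉ U⟦1⟧` be a non-split triangle with `U, V` indecomposable.  Then, with
`Ext¹(X,N) = Hom(X, N⟦1⟧)`, for every object `N`:
`dim Ext¹(E,N) ≤ dim Ext¹(U,N) + dim Ext¹(V,N)`, and for `N = U` the inequality is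
strict. -/
theorem ext_dim_middle_term_estimate
    {k : Type} [Field k] {C : Type*} [Category C] [Preadditive C] [Linear k C]
    [HasZeroObject C] [HasShift C ℤ] [∀ n : ℤ, (shiftFunctor C n).Additive]
    [Pretriangulated C] [HasBinaryBiproducts C]
    (hfin : ∀ X Y : C, FiniteDimensional k (X ⟶ Y))
    (hEnd : ∀ X : C, Indecomposable X → ∀ f : X ⟶ X, ∃ c : k, f = c • 𝟙 X)
    {U E V : C} (a : U ⟶ E) (b : E ⟶ V) (e : V ⟶ U⟦(1 : ℤ)⟧)
    (hT : Triangle.mk a b e ∈ distTriang C)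
    (hnonsplit : e ≠ 0)
    (hU : Indecomposable U) (hV : Indecomposable V) :
    (∀ N : C,
      Module.finrank k (E ⟶ N⟦(1 : ℤ)⟧) ≤
        Module.finrank k (U ⟶ N⟦(1 : ℤ)⟧) + Module.finrank k (V ⟶ N⟦(1 : ℤ)⟧)) ∧
    Module.finrank k (E ⟶ U⟦(1 : ℤ)⟧) <
      Module.finrank k (U ⟶ U⟦(1 : ℤ)⟧) + Module.finrank k (V ⟶ U⟦(1 : ℤ)⟧) := by
  constructor
  · intro N
    rw [ext_dim_aux hfin a b e hT (N⟦(1 : ℤ)⟧)]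
    haveI := hfin U (N⟦(1 : ℤ)⟧)
    haveI := hfin V (N⟦(1 : ℤ)⟧)
    exact Nat.add_le_add (Submodule.finrank_le _) (LinearMap.finrank_range_le _)
  · rw [ext_dim_aux hfin a b e hT (U⟦(1 : ℤ)⟧)]
    haveI := hfin U (U⟦(1 : ℤ)⟧)
    haveI := hfin V (U⟦(1 : ℤ)⟧)
    have h1 : Module.finrank k
        (LinearMap.range (Linear.leftComp k (U⟦(1 : ℤ)⟧) a : (E ⟶ U⟦(1 : ℤ)⟧) →ₗ[k] _)) ≤
        Module.finrank k (U ⟶ U⟦(1 : ℤ)⟧) := Submodule.finrank_le _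
    have h2 : Module.finrank k
        (LinearMap.range (Linear.leftComp k (U⟦(1 : ℤ)⟧) b : (V ⟶ U⟦(1 : ℤ)⟧) →ₗ[k] _)) <
        Module.finrank k (V ⟶ U⟦(1 : ℤ)⟧) := by
      have hrn := LinearMap.finrank_range_add_finrank_ker
        (Linear.leftComp k (U⟦(1 : ℤ)⟧) b : (V ⟶ U⟦(1 : ℤ)⟧) →ₗ[k] (E ⟶ U⟦(1 : ℤ)⟧))
      have hbe : b ≫ e = 0 := comp_distTriang_mor_zero₂₃ _ hT
      have he : e ∈ LinearMap.ker
          (Linear.leftComp k (U⟦(1 : ℤ)⟧) b : (V ⟶ U⟦(1 : ℤ)⟧) →ₗ[k] (E ⟶ U⟦(1 : ℤ)⟧)) := by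
        simpa [Linear.leftComp] using hbe
      have hker : 0 < Module.finrank k (LinearMap.ker
          (Linear.leftComp k (U⟦(1 : ℤ)⟧) b : (V ⟶ U⟦(1 : ℤ)⟧) →ₗ[k] (E ⟶ U⟦(1 : ℤ)⟧))) := by
        rw [Module.finrank_pos_iff]
        exact nontrivial_of_ne ⟨e, he⟩ 0
          (fun h => hnonsplit (by simpa using congrArg Subtype.val h))
      omega
    omega
end

section
/- Let C be a Krull–Schmidt triangulated category with Hom-finite spaces over k and each indecomposable having endomorphism ring k. Let U →^a E →^b V →^e U[1] be a non-split triangle with U, V indecomposable, and let L be any object. Set M = L ⊕ U ⊕ V and M' = L ⊕ E. Then dim Ext¹(M', M') < dim Ext¹(M, M). In particular, any chain of such 'elementary degenerations' descending from a fixed object is finite. -/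
open CategoryTheory CategoryTheory.Limits CategoryTheory.Pretriangulated

variable {k : Type} [Field k] {C : Type*} [Category C] [Preadditive C] [Linear k C]
  [HasZeroObject C] [HasShift C ℤ] [∀ n : ℤ, (shiftFunctor C n).Additive]
  [Pretriangulated C] [HasBinaryBiproducts C]

/-- An elementary degeneration `X ⪯ₑ X'`: `X' = L ⊕ U ⊕ V` and `X = L ⊕ E` with
`U → E → V → U⟦1⟧` a non-split triangle with `U, V` indecomposable. -/
def ElemDeg (X' X : C) : Prop :=
  ∃ (L U V E' : C) (a : U ⟶ E') (b : E' ⟶ V) (e : V ⟶ U⟦(1 : ℤ)⟧),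
    (Triangle.mk a b e ∈ distTriang C) ∧ e ≠ 0 ∧
    Indecomposable U ∧ Indecomposable V ∧
    Nonempty (X' ≅ L ⊞ U ⊞ V) ∧ Nonempty (X ≅ L ⊞ E')

section Aux

/-- linear-algebra: exactness at the middle bounds the dimension. -/
lemma aux_finrank_le_of_exact {A B D : Type*} [AddCommGroup A] [Module k A]
    [AddCommGroup B] [Module k B] [AddCommGroup D] [Module k D]
    [FiniteDimensional k A] [FiniteDimensional k B] [FiniteDimensional k D]
    (f : A →ₗ[k] B) (g : B →ₗ[k] D)
    (h : LinearMap.ker g ≤ LinearMap.range f) :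
    Module.finrank k B ≤ Module.finrank k D + Module.finrank k A := by
  calc Module.finrank k B
      = Module.finrank k (LinearMap.range g) + Module.finrank k (LinearMap.ker g) :=
        (LinearMap.finrank_range_add_finrank_ker g).symm
    _ ≤ Module.finrank k D + Module.finrank k A :=
        add_le_add (Submodule.finrank_le _)
          ((Submodule.finrank_mono h).trans (LinearMap.finrank_range_le f))

/-- strict version: the first map has nontrivial kernel. -/
lemma aux_finrank_lt_of_exact {A B D : Type*} [AddCommGroup A] [Module k A]
    [AddCommGroup B] [Module k B] [AddCommGroup D] [Module k D]
    [FiniteDimensional k A] [FiniteDimensional k B] [FiniteDimensional k D]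
    (f : A →ₗ[k] B) (g : B →ₗ[k] D)
    (h : LinearMap.ker g ≤ LinearMap.range f)
    (x : A) (hx : x ≠ 0) (hfx : f x = 0) :
    Module.finrank k B < Module.finrank k D + Module.finrank k A := by
  have hker : Nontrivial (LinearMap.ker f) :=
    ⟨⟨x, by simpa [LinearMap.mem_ker] using hfx⟩, 0, by simpa [Subtype.ext_iff] using hx⟩
  have hpos : 0 < Module.finrank k (LinearMap.ker f) := Module.finrank_pos
  have hsum : Module.finrank k (LinearMap.range f) + Module.finrank k (LinearMap.ker f)
      = Module.finrank k A := LinearMap.finrank_range_add_finrank_ker f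
  have hrange : Module.finrank k (LinearMap.range f) < Module.finrank k A := by omega
  calc Module.finrank k B
      = Module.finrank k (LinearMap.range g) + Module.finrank k (LinearMap.ker g) :=
        (LinearMap.finrank_range_add_finrank_ker g).symm
    _ ≤ Module.finrank k D + Module.finrank k (LinearMap.range f) :=
        add_le_add (Submodule.finrank_le _) (Submodule.finrank_mono h)
    _ < Module.finrank k D + Module.finrank k A := by omega

/-- covariant Hom-exactness estimate for a distinguished triangle. -/
lemma aux_cov_le (hfin : ∀ X Y : C, FiniteDimensional k (X ⟶ Y))
    (T : Triangle C) (hT : T ∈ distTriang C) (X : C) :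
    Module.finrank k (X ⟶ T.obj₂) ≤
      Module.finrank k (X ⟶ T.obj₃) + Module.finrank k (X ⟶ T.obj₁) := by
  haveI := hfin X T.obj₁; haveI := hfin X T.obj₂; haveI := hfin X T.obj₃
  refine aux_finrank_le_of_exact (Linear.rightComp k X T.mor₁)
    (Linear.rightComp k X T.mor₂) ?_
  intro f hf
  obtain ⟨g, hg⟩ := T.coyoneda_exact₂ hT f (by simpa using hf)
  exact ⟨g, hg.symm⟩

/-- contravariant Hom-exactness estimate for a distinguished triangle. -/
lemma aux_contra_le (hfin : ∀ X Y : C, FiniteDimensional k (X ⟶ Y))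
    (T : Triangle C) (hT : T ∈ distTriang C) (X : C) :
    Module.finrank k (T.obj₂ ⟶ X) ≤
      Module.finrank k (T.obj₁ ⟶ X) + Module.finrank k (T.obj₃ ⟶ X) := by
  haveI := hfin T.obj₁ X; haveI := hfin T.obj₂ X; haveI := hfin T.obj₃ X
  refine aux_finrank_le_of_exact (Linear.leftComp k X T.mor₂)
    (Linear.leftComp k X T.mor₁) ?_
  intro f hf
  obtain ⟨g, hg⟩ := T.yoneda_exact₂ hT f (by simpa using hf)
  exact ⟨g, hg.symm⟩

/-- strict contravariant estimate, when some nonzero map from `obj₃` dies on `obj₂`. -/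
lemma aux_contra_lt (hfin : ∀ X Y : C, FiniteDimensional k (X ⟶ Y))
    (T : Triangle C) (hT : T ∈ distTriang C) (X : C)
    (φ : T.obj₃ ⟶ X) (h₁ : T.mor₂ ≫ φ = 0) (h₂ : φ ≠ 0) :
    Module.finrank k (T.obj₂ ⟶ X) <
      Module.finrank k (T.obj₁ ⟶ X) + Module.finrank k (T.obj₃ ⟶ X) := by
  haveI := hfin T.obj₁ X; haveI := hfin T.obj₂ X; haveI := hfin T.obj₃ X
  refine aux_finrank_lt_of_exact (Linear.leftComp k X T.mor₂)
    (Linear.leftComp k X T.mor₁) ?_ φ h₂ (by simpa using h₁)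
  intro f hf
  obtain ⟨g, hg⟩ := T.yoneda_exact₂ hT f (by simpa using hf)
  exact ⟨g, hg.symm⟩

/-- `Hom(A ⊞ B, Z)` decomposes linearly. -/
noncomputable def auxHomBiprodLeft (A B Z : C) :
    ((A ⊞ B) ⟶ Z) ≃ₗ[k] (A ⟶ Z) × (B ⟶ Z) where
  toFun f := (biprod.inl ≫ f, biprod.inr ≫ f)
  map_add' f g := by simp [Preadditive.comp_add]
  map_smul' c f := by simp [Linear.comp_smul, Prod.smul_def]
  invFun p := biprod.desc p.1 p.2
  left_inv f := by apply biprod.hom_ext' <;> simp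
  right_inv p := by simp

/-- `Hom(Z, A ⊞ B)` decomposes linearly. -/
noncomputable def auxHomBiprodRight (Z A B : C) :
    (Z ⟶ A ⊞ B) ≃ₗ[k] (Z ⟶ A) × (Z ⟶ B) where
  toFun f := (f ≫ biprod.fst, f ≫ biprod.snd)
  map_add' f g := by simp [Preadditive.add_comp]
  map_smul' c f := by simp [Linear.smul_comp, Prod.smul_def]
  invFun p := biprod.lift p.1 p.2
  left_inv f := by apply biprod.hom_ext <;> simp
  right_inv p := by simp

lemma aux_finrank_biprod_left (hfin : ∀ X Y : C, FiniteDimensional k (X ⟶ Y)) (A B Z : C) :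
    Module.finrank k ((A ⊞ B) ⟶ Z) =
      Module.finrank k (A ⟶ Z) + Module.finrank k (B ⟶ Z) := by
  haveI := hfin A Z; haveI := hfin B Z
  rw [(auxHomBiprodLeft (k := k) A B Z).finrank_eq, Module.finrank_prod]

lemma aux_finrank_biprod_right (hfin : ∀ X Y : C, FiniteDimensional k (X ⟶ Y)) (Z A B : C) :
    Module.finrank k (Z ⟶ A ⊞ B) =
      Module.finrank k (Z ⟶ A) + Module.finrank k (Z ⟶ B) := by
  haveI := hfin Z A; haveI := hfin Z B
  rw [(auxHomBiprodRight (k := k) Z A B).finrank_eq, Module.finrank_prod]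

/-- The shift commutes with binary biproducts. -/
noncomputable def auxShiftBiprod (A B : C) :
    (A ⊞ B)⟦(1 : ℤ)⟧ ≅ A⟦(1 : ℤ)⟧ ⊞ B⟦(1 : ℤ)⟧ where
  hom := biprod.lift ((biprod.fst : A ⊞ B ⟶ A)⟦(1 : ℤ)⟧') ((biprod.snd : A ⊞ B ⟶ B)⟦(1 : ℤ)⟧')
  inv := biprod.desc ((biprod.inl : A ⟶ A ⊞ B)⟦(1 : ℤ)⟧') ((biprod.inr : B ⟶ A ⊞ B)⟦(1 : ℤ)⟧')
  hom_inv_id := by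
    rw [biprod.lift_desc, ← Functor.map_comp, ← Functor.map_comp, ← Functor.map_add,
      biprod.total, CategoryTheory.Functor.map_id]
  inv_hom_id := by
    apply biprod.hom_ext' <;> apply biprod.hom_ext <;>
      simp [← Functor.map_comp]

lemma aux_finrank_hom_shift_biprod (hfin : ∀ X Y : C, FiniteDimensional k (X ⟶ Y))
    (X A B : C) :
    Module.finrank k (X ⟶ (A ⊞ B)⟦(1 : ℤ)⟧) =
      Module.finrank k (X ⟶ A⟦(1 : ℤ)⟧) + Module.finrank k (X ⟶ B⟦(1 : ℤ)⟧) := by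
  rw [(Linear.homCongr k (Iso.refl X) (auxShiftBiprod A B)).finrank_eq,
    aux_finrank_biprod_right hfin]

/-- The key strict inequality. -/
lemma aux_key (hfin : ∀ X Y : C, FiniteDimensional k (X ⟶ Y))
    {U E V : C} (a : U ⟶ E) (b : E ⟶ V) (e : V ⟶ U⟦(1 : ℤ)⟧)
    (hT : Triangle.mk a b e ∈ distTriang C) (hnonsplit : e ≠ 0) (L : C) :
    Module.finrank k ((L ⊞ E) ⟶ (L ⊞ E)⟦(1 : ℤ)⟧) <
      Module.finrank k ((L ⊞ U ⊞ V) ⟶ (L ⊞ U ⊞ V)⟦(1 : ℤ)⟧) := by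
  set T : Triangle C := Triangle.mk a b e with hTdef
  have hT3 : T.rotate.rotate.rotate ∈ distTriang C :=
    rot_of_distTriang _ (rot_of_distTriang _ (rot_of_distTriang _ hT))
  -- expansions of both sides
  simp only [aux_finrank_biprod_left hfin, aux_finrank_hom_shift_biprod hfin]
  have h1 : Module.finrank k (L ⟶ E⟦(1 : ℤ)⟧) ≤
      Module.finrank k (L ⟶ V⟦(1 : ℤ)⟧) + Module.finrank k (L ⟶ U⟦(1 : ℤ)⟧) :=
    aux_cov_le hfin _ hT3 L
  have h3 : Module.finrank k (E ⟶ E⟦(1 : ℤ)⟧) ≤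
      Module.finrank k (E ⟶ V⟦(1 : ℤ)⟧) + Module.finrank k (E ⟶ U⟦(1 : ℤ)⟧) :=
    aux_cov_le hfin _ hT3 E
  have h2 : Module.finrank k (E ⟶ L⟦(1 : ℤ)⟧) ≤
      Module.finrank k (U ⟶ L⟦(1 : ℤ)⟧) + Module.finrank k (V ⟶ L⟦(1 : ℤ)⟧) :=
    aux_contra_le hfin T hT (L⟦(1 : ℤ)⟧)
  have h4 : Module.finrank k (E ⟶ V⟦(1 : ℤ)⟧) ≤
      Module.finrank k (U ⟶ V⟦(1 : ℤ)⟧) + Module.finrank k (V ⟶ V⟦(1 : ℤ)⟧) :=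
    aux_contra_le hfin T hT (V⟦(1 : ℤ)⟧)
  have h5 : Module.finrank k (E ⟶ U⟦(1 : ℤ)⟧) <
      Module.finrank k (U ⟶ U⟦(1 : ℤ)⟧) + Module.finrank k (V ⟶ U⟦(1 : ℤ)⟧) :=
    aux_contra_lt hfin T hT (U⟦(1 : ℤ)⟧) e
      (comp_distTriang_mor_zero₂₃ T hT) hnonsplit
  omega

end Aux

/-- In a Hom-finite Krull–Schmidt `k`-linear triangulated category
with all endomorphism rings of indecomposables equal to `k`, let
`U →ᵃ E →ᵇ V →ᵉ U⟦1⟧` be a non-split triangle with `U, V` indecomposable and let `L` be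
any object.  With `M = L ⊕ U ⊕ V` and `M' = L ⊕ E`, one has
`dim Ext¹(M',M') < dim Ext¹(M,M)`.  In particular, there is no infinite chain of
elementary degenerations descending from a fixed object. -/
theorem elementary_degeneration_strictly_decreases_ext
    (hfin : ∀ X Y : C, FiniteDimensional k (X ⟶ Y))
    (hEnd : ∀ X : C, Indecomposable X → ∀ f : X ⟶ X, ∃ c : k, f = c • 𝟙 X)
    {U E V : C} (a : U ⟶ E) (b : E ⟶ V) (e : V ⟶ U⟦(1 : ℤ)⟧)
    (hT : Triangle.mk a b e ∈ distTriang C)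
    (hnonsplit : e ≠ 0)
    (hU : Indecomposable U) (hV : Indecomposable V) (L : C) :
    Module.finrank k ((L ⊞ E) ⟶ (L ⊞ E)⟦(1 : ℤ)⟧) <
      Module.finrank k ((L ⊞ U ⊞ V) ⟶ (L ⊞ U ⊞ V)⟦(1 : ℤ)⟧) ∧
    ∀ g : ℕ → C, ¬ (∀ n : ℕ, ElemDeg (g n) (g (n + 1))) := by
  refine ⟨aux_key hfin a b e hT hnonsplit L, ?_⟩
  intro g hg
  set f : ℕ → ℕ := fun n => Module.finrank k (g n ⟶ (g n)⟦(1 : ℤ)⟧) with hf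
  have hlt : ∀ n, f (n + 1) < f n := by
    intro n
    obtain ⟨L', U', V', E', a', b', e', hT', hns', _, _, ⟨i1⟩, ⟨i2⟩⟩ := hg n
    have e2 : f (n + 1) = Module.finrank k ((L' ⊞ E') ⟶ (L' ⊞ E')⟦(1 : ℤ)⟧) :=
      (Linear.homCongr k i2 ((shiftFunctor C (1 : ℤ)).mapIso i2)).finrank_eq
    have e1 : f n = Module.finrank k ((L' ⊞ U' ⊞ V') ⟶ (L' ⊞ U' ⊞ V')⟦(1 : ℤ)⟧) :=
      (Linear.homCongr k i1 ((shiftFunctor C (1 : ℤ)).mapIso i1)).finrank_eq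
    rw [e1, e2]
    exact aux_key hfin a' b' e' hT' hns' L'
  have hbound : ∀ n, f n + n ≤ f 0 := by
    intro n
    induction n with
    | zero => simp
    | succ m ih => have := hlt m; omega
  have := hbound (f 0 + 1)
  omega
end
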